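/- arXiv:2402.11219 — 3 statements merged into one kernel-verified Lean document; each statement's English description precedes it below -/
import Mathlib

section
/- Let a, b, c, d, q be positive reals with c ≥ 0, let n be an integer with n > 1 + 2q (so n-1-q > 0), and define f(w) = [a{q(1-2w)+(n-1)w^2} + 2bc(1-w)^2] / (2[d{q+(n-1-2q)w}+c(1-w)]^2) on [0,1], assuming the denominator is positive on [0,1]. Then f is strictly decreasing on [0, w*) and strictly increasing on (w*, 1], where w* = (adq + 2bcd)/(2adq + 2bcd + ac); hence f attains its unique minimum on [0,1] at w*. -/
/-!
Up to the positive factor `n - 1 - q` and the positive cube of `d (q + (n - 1 - 2q) w) + c (1 - w)`,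
the derivative of `f` is the affine function `(2adq + 2bcd + ac) w - (adq + 2bcd)`, which changes
sign exactly once, at `w*`; and `0 < w* < 1` because `ac ≥ 0` and `adq > 0`. So `f` decreases
strictly up to `w*`, increases strictly after it, and its minimum on `[0, 1]` is attained only there.
-/

open Set

section ValleyShape

variable {f f' : ℝ → ℝ} {l m u : ℝ}

theorem strictAntiOn_Icc_strictMonoOn_Icc_of_hasDerivAt (hlm : l ≤ m) (hmu : m ≤ u)
    (hf : ∀ x ∈ Icc l u, HasDerivAt f (f' x) x)
    (hneg : ∀ x ∈ Ioo l m, f' x < 0) (hpos : ∀ x ∈ Ioo m u, 0 < f' x) :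
    StrictAntiOn f (Icc l m) ∧ StrictMonoOn f (Icc m u) := by
  have hcont : ContinuousOn f (Icc l u) := fun x hx => (hf x hx).continuousAt.continuousWithinAt
  constructor
  · refine strictAntiOn_of_deriv_neg (convex_Icc l m) (hcont.mono (Icc_subset_Icc_right hmu)) ?_
    intro x hx
    rw [interior_Icc] at hx
    rw [(hf x ⟨hx.1.le, hx.2.le.trans hmu⟩).deriv]
    exact hneg x hx
  · refine strictMonoOn_of_deriv_pos (convex_Icc m u) (hcont.mono (Icc_subset_Icc_left hlm)) ?_
    intro x hx
    rw [interior_Icc] at hx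
    rw [(hf x ⟨hlm.trans hx.1.le, hx.2.le⟩).deriv]
    exact hpos x hx

theorem lt_of_strictAntiOn_Icc_of_strictMonoOn_Icc (hlm : l ≤ m) (hmu : m ≤ u)
    (hanti : StrictAntiOn f (Icc l m)) (hmono : StrictMonoOn f (Icc m u))
    {w : ℝ} (hw : w ∈ Icc l u) (hne : w ≠ m) : f m < f w := by
  rcases hne.lt_or_gt with h | h
  · exact hanti ⟨hw.1, h.le⟩ ⟨hlm, le_rfl⟩ h
  · exact hmono ⟨le_rfl, hmu⟩ ⟨h.le, hw.2⟩ h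

end ValleyShape

theorem hasDerivAt_weight_bound (a b c d q N x : ℝ)
    (hx : d * (q + (N - 1 - 2*q) * x) + c * (1 - x) ≠ 0) :
    HasDerivAt (fun w => (a * (q * (1 - 2*w) + (N - 1) * w^2) + 2*b*c*(1 - w)^2) /
        (2 * (d * (q + (N - 1 - 2*q) * w) + c * (1 - w))^2))
      (((2*a*d*q + 2*b*c*d + a*c) * x - (a*d*q + 2*b*c*d)) * (N - 1 - q) /
        (d * (q + (N - 1 - 2*q) * x) + c * (1 - x))^3) x := by
  have hid := hasDerivAt_id' x
  have hnum := ((((hid.const_mul 2).const_sub 1).const_mul q).fun_add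
    ((hid.fun_pow 2).const_mul (N - 1))).const_mul a |>.fun_add
      (((hid.const_sub 1).fun_pow 2).const_mul (2*b*c))
  have hden := ((((hid.const_mul (N - 1 - 2*q)).const_add q).const_mul d).fun_add
    ((hid.const_sub 1).const_mul c)).fun_pow 2 |>.const_mul 2
  refine (hnum.fun_div hden (by simpa using hx)).congr_deriv ?_
  norm_num
  field_simp
  ring

/-- The upper bound function `f(w)` is strictly decreasing on `[0, w*)`, strictly
increasing on `(w*, 1]`, and attains its unique minimum on `[0,1]` at
`w* = (adq + 2bcd)/(2adq + 2bcd + ac)`. -/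
theorem weight_minimizer
    (a b c d q : ℝ) (n : ℤ) (ha : 0 < a) (hb : 0 < b) (hc : 0 ≤ c) (hd : 0 < d)
    (hq : 0 < q) (hn : (n : ℝ) > 1 + 2 * q)
    (f : ℝ → ℝ)
    (hf : ∀ w, f w = (a * (q * (1 - 2*w) + ((n : ℝ) - 1) * w^2) + 2*b*c*(1 - w)^2) /
      (2 * (d * (q + ((n : ℝ) - 1 - 2*q) * w) + c * (1 - w))^2))
    (hden : ∀ w ∈ Set.Icc (0:ℝ) 1, 0 < d * (q + ((n : ℝ) - 1 - 2*q) * w) + c * (1 - w))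
    (wstar : ℝ) (hw : wstar = (a*d*q + 2*b*c*d) / (2*a*d*q + 2*b*c*d + a*c)) :
    StrictAntiOn f (Set.Ico 0 wstar) ∧ StrictMonoOn f (Set.Ioc wstar 1) ∧
      ∀ w ∈ Set.Icc (0:ℝ) 1, w ≠ wstar → f wstar < f w := by
  obtain rfl := funext hf
  have hP : 0 < a*d*q + 2*b*c*d := by positivity
  have hM : 0 < 2*a*d*q + 2*b*c*d + a*c := by positivity
  have hw0 : 0 < wstar := hw ▸ div_pos hP hM
  have hw1 : wstar < 1 := hw ▸ (div_lt_one hM).2 (by nlinarith [mul_pos (mul_pos ha hd) hq])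
  have hk : 0 < (n : ℝ) - 1 - q := by linarith
  obtain ⟨hanti, hmono⟩ := strictAntiOn_Icc_strictMonoOn_Icc_of_hasDerivAt hw0.le hw1.le
    (fun x hx => hasDerivAt_weight_bound a b c d q n x (hden x hx).ne')
    (fun x hx => by
      have hlin : (2*a*d*q + 2*b*c*d + a*c) * x < a*d*q + 2*b*c*d :=
        (lt_div_iff₀' hM).1 (hw ▸ hx.2)
      exact div_neg_of_neg_of_pos (mul_neg_of_neg_of_pos (sub_neg.2 hlin) hk)
        (pow_pos (hden x ⟨hx.1.le, (hx.2.trans hw1).le⟩) 3))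
    (fun x hx => by
      have hlin : a*d*q + 2*b*c*d < (2*a*d*q + 2*b*c*d + a*c) * x :=
        (div_lt_iff₀' hM).1 (hw ▸ hx.1)
      exact div_pos (mul_pos (sub_pos.2 hlin) hk)
        (pow_pos (hden x ⟨(hw0.trans hx.1).le, hx.2.le⟩) 3))
  exact ⟨hanti.mono Ico_subset_Icc_self, hmono.mono Ioc_subset_Icc_self,
    fun w hw01 hne => lt_of_strictAntiOn_Icc_of_strictMonoOn_Icc hw0.le hw1.le hanti hmono hw01 hne⟩
end

section
/- Let A and B be p×p real symmetric matrices. Let λ_1(B) > λ_2(B) be the two largest eigenvalues of B, v a unit eigenvector of B for λ_1(B), and u a unit eigenvector of A for its largest eigenvalue. Then min_{θ∈{-1,1}} ‖θu - v‖^2 ≤ 8‖A - B‖_op^2 / (λ_1(B) - λ_2(B))^2. -/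
/-!
Write `s = u ⬝ᵥ v`. Since `λ₁(B)` is a simple top eigenvalue, `u ⬝ᵥ B u ≤ λ₁ s² + λ₂ (1 - s²)`,
and since `ν` is the top eigenvalue of `A`, `v ⬝ᵥ A v ≤ u ⬝ᵥ A u`. For symmetric `M`,
`(u - v) ⬝ᵥ M (u + v) = u ⬝ᵥ M u - v ⬝ᵥ M v`, so with `M = A - B` these give
`(λ₁ - λ₂)(1 - s²) ≤ (u - v) ⬝ᵥ (A - B)(u + v) ≤ ‖A - B‖ ‖u - v‖ ‖u + v‖ = 2 ‖A - B‖ √(1 - s²)`,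
i.e. the sin θ bound `1 - s² ≤ 4 ‖A - B‖² / (λ₁ - λ₂)²`. Finally the better of the two signs
gives `2 - 2|s| ≤ 2 (1 - s²)`.
-/

open Matrix
open scoped Matrix Matrix.Norms.L2Operator

namespace Matrix

variable {m n : Type*} [Fintype m] [Fintype n]

lemma sub_dotProduct_sub_self (x y : n → ℝ) :
    (x - y) ⬝ᵥ (x - y) = x ⬝ᵥ x - 2 * (x ⬝ᵥ y) + y ⬝ᵥ y := by
  simp only [sub_dotProduct, dotProduct_sub, dotProduct_comm y x]
  ring

lemma add_dotProduct_add_self (x y : n → ℝ) :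
    (x + y) ⬝ᵥ (x + y) = x ⬝ᵥ x + 2 * (x ⬝ᵥ y) + y ⬝ᵥ y := by
  simp only [add_dotProduct, dotProduct_add, dotProduct_comm y x]
  ring

lemma min_sub_dotProduct_le {u v : n → ℝ} (hu : u ⬝ᵥ u = 1) (hv : v ⬝ᵥ v = 1) :
    min ((u - v) ⬝ᵥ (u - v)) ((-u - v) ⬝ᵥ (-u - v)) ≤ 2 * (1 - (u ⬝ᵥ v) ^ 2) := by
  have hsub : (u - v) ⬝ᵥ (u - v) = 2 - 2 * (u ⬝ᵥ v) := by
    rw [sub_dotProduct_sub_self, hu, hv]; ring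
  have hadd : (-u - v) ⬝ᵥ (-u - v) = 2 + 2 * (u ⬝ᵥ v) := by
    rw [← neg_add', neg_dotProduct, dotProduct_neg, neg_neg, add_dotProduct_add_self, hu, hv]
    ring
  have hsub_nonneg : 0 ≤ (u - v) ⬝ᵥ (u - v) := by
    simpa using dotProduct_self_star_nonneg (u - v)
  have hadd_nonneg : 0 ≤ (-u - v) ⬝ᵥ (-u - v) := by
    simpa using dotProduct_self_star_nonneg (-u - v)
  rw [hsub, hadd] at *
  rcases le_total 0 (u ⬝ᵥ v) with hs | hs
  · exact (min_le_left _ _).trans (by nlinarith)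
  · exact (min_le_right _ _).trans (by nlinarith)

lemma sub_dotProduct_mulVec_add {M : Matrix n n ℝ} (hM : M.IsSymm) (x y : n → ℝ) :
    (x - y) ⬝ᵥ M *ᵥ (x + y) = x ⬝ᵥ M *ᵥ x - y ⬝ᵥ M *ᵥ y := by
  have hsymm : y ⬝ᵥ M *ᵥ x = x ⬝ᵥ M *ᵥ y := by
    rw [dotProduct_mulVec, ← mulVec_transpose, hM.eq, dotProduct_comm]
  simp only [mulVec_add, sub_dotProduct, dotProduct_add, hsymm]
  ring

lemma _root_.EuclideanSpace.norm_sq_equiv_symm (z : n → ℝ) :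
    ‖(EuclideanSpace.equiv n ℝ).symm z‖ ^ 2 = z ⬝ᵥ z := by
  rw [← real_inner_self_eq_norm_sq, EuclideanSpace.inner_eq_star_dotProduct]
  rfl

lemma sq_dotProduct_mulVec_le [DecidableEq n] (M : Matrix m n ℝ) (x : m → ℝ) (y : n → ℝ) :
    (x ⬝ᵥ M *ᵥ y) ^ 2 ≤ ‖M‖ ^ 2 * (x ⬝ᵥ x) * (y ⬝ᵥ y) := by
  set X := (EuclideanSpace.equiv m ℝ).symm x
  set Y := (EuclideanSpace.equiv n ℝ).symm y
  have hinner : x ⬝ᵥ M *ᵥ y = inner ℝ X ((EuclideanSpace.equiv m ℝ).symm (M *ᵥ y)) := by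
    rw [EuclideanSpace.inner_eq_star_dotProduct, dotProduct_comm]
    rfl
  have hle : |x ⬝ᵥ M *ᵥ y| ≤ ‖X‖ * (‖M‖ * ‖Y‖) := by
    rw [hinner]
    exact (abs_real_inner_le_norm _ _).trans
      (mul_le_mul_of_nonneg_left (M.l2_opNorm_mulVec Y) (norm_nonneg X))
  calc (x ⬝ᵥ M *ᵥ y) ^ 2 = |x ⬝ᵥ M *ᵥ y| ^ 2 := (sq_abs _).symm
    _ ≤ (‖X‖ * (‖M‖ * ‖Y‖)) ^ 2 := pow_le_pow_left₀ (abs_nonneg _) hle 2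
    _ = ‖M‖ ^ 2 * (x ⬝ᵥ x) * (y ⬝ᵥ y) := by
      rw [← EuclideanSpace.norm_sq_equiv_symm x, ← EuclideanSpace.norm_sq_equiv_symm y]; ring

lemma dotProduct_conj_diagonal_mulVec [DecidableEq n] (Γ : Matrix n n ℝ) (lam x : n → ℝ) :
    x ⬝ᵥ (Γ * diagonal lam * Γᵀ) *ᵥ x = ∑ i, lam i * (Γᵀ *ᵥ x) i ^ 2 := by
  rw [← mulVec_mulVec, ← mulVec_mulVec, dotProduct_mulVec, ← mulVec_transpose]
  simp only [dotProduct, mulVec_diagonal]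
  exact Finset.sum_congr rfl fun i _ => by ring

variable [DecidableEq n]

lemma transpose_mulVec_dotProduct_transpose_mulVec {Γ : Matrix n n ℝ} (hΓ : Γ * Γᵀ = 1)
    (x y : n → ℝ) : (Γᵀ *ᵥ x) ⬝ᵥ (Γᵀ *ᵥ y) = x ⬝ᵥ y := by
  rw [mulVec_transpose Γ x, ← dotProduct_mulVec, mulVec_mulVec, hΓ, one_mulVec]

lemma dotProduct_conj_diagonal_mulVec_le {Γ : Matrix n n ℝ} (hΓ : Γ * Γᵀ = 1) {lam : n → ℝ}
    {ν : ℝ} (hlam : ∀ i, lam i ≤ ν) (x : n → ℝ) :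
    x ⬝ᵥ (Γ * diagonal lam * Γᵀ) *ᵥ x ≤ ν * (x ⬝ᵥ x) := by
  rw [dotProduct_conj_diagonal_mulVec, ← transpose_mulVec_dotProduct_transpose_mulVec hΓ x x,
    dotProduct, Finset.mul_sum]
  exact Finset.sum_le_sum fun i _ => by
    rw [← sq]; exact mul_le_mul_of_nonneg_right (hlam i) (sq_nonneg _)

lemma IsHermitian.dotProduct_mulVec_le {A : Matrix n n ℝ} (hA : A.IsHermitian) {ν : ℝ}
    (hν : ∀ (c : ℝ) (x : n → ℝ), x ≠ 0 → A *ᵥ x = c • x → c ≤ ν) (x : n → ℝ) :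
    x ⬝ᵥ A *ᵥ x ≤ ν * (x ⬝ᵥ x) := by
  have heig : ∀ i, hA.eigenvalues i ≤ ν := fun i =>
    hν _ _ (fun h => hA.eigenvectorBasis.orthonormal.ne_zero i (WithLp.ofLp_injective 2 h))
      (hA.mulVec_eigenvectorBasis i)
  set U : Matrix n n ℝ := (hA.eigenvectorUnitary : Matrix n n ℝ)
  have hU : U * Uᵀ = 1 := Unitary.coe_mul_star_self hA.eigenvectorUnitary
  have hA' : A = U * diagonal hA.eigenvalues * Uᵀ := by
    conv_lhs => rw [hA.spectral_theorem]
    simp [U, RCLike.ofReal_real_eq_id, star_eq_conjTranspose,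
      conjTranspose_eq_transpose_of_trivial]
  rw [hA']
  exact dotProduct_conj_diagonal_mulVec_le hU heig x

lemma transpose_mulVec_eq_single {Γ : Matrix n n ℝ} (hΓ : Γ * Γᵀ = 1) {lam : n → ℝ} {i₀ : n}
    (hlam : ∀ i ≠ i₀, lam i ≠ lam i₀) {v : n → ℝ}
    (hv : (Γ * diagonal lam * Γᵀ) *ᵥ v = lam i₀ • v) :
    Γᵀ *ᵥ v = Pi.single i₀ ((Γᵀ *ᵥ v) i₀) := by
  have hdiag : diagonal lam *ᵥ (Γᵀ *ᵥ v) = lam i₀ • (Γᵀ *ᵥ v) := by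
    rw [← mulVec_smul, ← hv, mulVec_mulVec, mulVec_mulVec, ← mul_assoc, ← mul_assoc,
      mul_eq_one_comm.mp hΓ, one_mul]
  funext i
  by_cases hi : i = i₀
  · subst hi; simp
  · have hcoord := congrFun hdiag i
    simp only [mulVec_diagonal, Pi.smul_apply, smul_eq_mul] at hcoord
    rw [Pi.single_eq_of_ne hi]
    exact (mul_eq_mul_right_iff.mp hcoord).resolve_left (hlam i hi)

lemma dotProduct_conj_diagonal_mulVec_le_of_gap {Γ : Matrix n n ℝ} (hΓ : Γ * Γᵀ = 1)
    {lam : n → ℝ} {i₀ : n} {μ : ℝ} (hlam : ∀ i ≠ i₀, lam i ≤ μ) (hgap : μ < lam i₀)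
    {v : n → ℝ} (hv : v ⬝ᵥ v = 1) (hveig : (Γ * diagonal lam * Γᵀ) *ᵥ v = lam i₀ • v)
    (x : n → ℝ) :
    x ⬝ᵥ (Γ * diagonal lam * Γᵀ) *ᵥ x ≤
      lam i₀ * (x ⬝ᵥ v) ^ 2 + μ * (x ⬝ᵥ x - (x ⬝ᵥ v) ^ 2) := by
  set c := Γᵀ *ᵥ x
  set d := Γᵀ *ᵥ v
  have hd : d = Pi.single i₀ (d i₀) :=
    transpose_mulVec_eq_single hΓ (fun i hi => ((hlam i hi).trans_lt hgap).ne) hveig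
  have hd_sq : d i₀ ^ 2 = 1 := by
    calc d i₀ ^ 2 = d ⬝ᵥ Pi.single i₀ (d i₀) := by rw [dotProduct_single, sq]
      _ = 1 := by rw [← hd, transpose_mulVec_dotProduct_transpose_mulVec hΓ, hv]
  have hxv : (x ⬝ᵥ v) ^ 2 = c i₀ ^ 2 := by
    rw [← transpose_mulVec_dotProduct_transpose_mulVec hΓ]
    change (c ⬝ᵥ d) ^ 2 = _
    conv_lhs => rw [hd]
    rw [dotProduct_single, mul_pow, hd_sq, mul_one]
  have hxx : x ⬝ᵥ x = ∑ i, c i ^ 2 := by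
    rw [← transpose_mulVec_dotProduct_transpose_mulVec hΓ x x]
    simp only [c, dotProduct, sq]
  rw [dotProduct_conj_diagonal_mulVec, hxv, hxx, ← Finset.add_sum_erase _ _ (Finset.mem_univ i₀),
    ← Finset.add_sum_erase _ (fun i => c i ^ 2) (Finset.mem_univ i₀), add_sub_cancel_left,
    Finset.mul_sum]
  gcongr with i hi
  exact hlam i (Finset.ne_of_mem_erase hi)

lemma one_sub_sq_dotProduct_le {A B : Matrix n n ℝ} (hA : A.IsHermitian)
    (hB : B.IsHermitian) {u v : n → ℝ} (hu : u ⬝ᵥ u = 1) (hv : v ⬝ᵥ v = 1) {g : ℝ} (hg : 0 < g)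
    (hAuv : v ⬝ᵥ A *ᵥ v ≤ u ⬝ᵥ A *ᵥ u)
    (hBuv : g * (1 - (u ⬝ᵥ v) ^ 2) ≤ v ⬝ᵥ B *ᵥ v - u ⬝ᵥ B *ᵥ u) :
    1 - (u ⬝ᵥ v) ^ 2 ≤ 4 * ‖A - B‖ ^ 2 / g ^ 2 := by
  set t := 1 - (u ⬝ᵥ v) ^ 2
  have hq : g * t ≤ (u - v) ⬝ᵥ (A - B) *ᵥ (u + v) := by
    rw [sub_dotProduct_mulVec_add (isHermitian_iff_isSymm.mp (hA.sub hB))]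
    simp only [sub_mulVec, dotProduct_sub]
    linarith
  have hCS : ((u - v) ⬝ᵥ (A - B) *ᵥ (u + v)) ^ 2 ≤ 4 * ‖A - B‖ ^ 2 * t := by
    calc _ ≤ ‖A - B‖ ^ 2 * ((u - v) ⬝ᵥ (u - v)) * ((u + v) ⬝ᵥ (u + v)) :=
          sq_dotProduct_mulVec_le _ _ _
      _ = 4 * ‖A - B‖ ^ 2 * t := by
          rw [sub_dotProduct_sub_self, add_dotProduct_add_self, hu, hv]; ring
  rcases le_or_gt t 0 with ht | ht
  · exact ht.trans (by positivity)
  rw [le_div_iff₀ (by positivity)]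
  have hgt : (g * t) ^ 2 ≤ 4 * ‖A - B‖ ^ 2 * t :=
    (pow_le_pow_left₀ (by positivity) hq 2).trans hCS
  nlinarith

end Matrix

/-- Davis–Kahan type bound: if `v` is a unit leading eigenvector of a symmetric matrix `B`
whose top eigengap is `λ₁(B) - λ₂(B) > 0`, and `u` is a unit eigenvector of a symmetric
matrix `A` for its largest eigenvalue, then
`min_{θ = ±1} ‖θu - v‖² ≤ 8‖A - B‖_op² / (λ₁(B) - λ₂(B))²`. -/
theorem davis_kahan_min_sign_bound
    {p : ℕ} (A B Γ : Matrix (Fin (p + 2)) (Fin (p + 2)) ℝ) (lam : Fin (p + 2) → ℝ)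
    (hAh : A.IsHermitian) (hBh : B.IsHermitian)
    (hΓ : Γ * Γᵀ = 1) (hB : B = Γ * diagonal lam * Γᵀ) (hmono : Antitone lam)
    (hgap : lam 1 < lam 0)
    (v : Fin (p + 2) → ℝ) (hv : v ⬝ᵥ v = 1) (hveig : B.mulVec v = lam 0 • v)
    (u : Fin (p + 2) → ℝ) (hu : u ⬝ᵥ u = 1) (ν : ℝ) (hueig : A.mulVec u = ν • u)
    (hmax : ∀ (c : ℝ) (x : Fin (p + 2) → ℝ), x ≠ 0 → A.mulVec x = c • x → c ≤ ν) :
    min ((u - v) ⬝ᵥ (u - v)) ((-u - v) ⬝ᵥ (-u - v)) ≤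
      8 * ‖A - B‖^2 / (lam 0 - lam 1)^2 := by
  have hBu : u ⬝ᵥ B *ᵥ u ≤ lam 0 * (u ⬝ᵥ v) ^ 2 + lam 1 * (1 - (u ⬝ᵥ v) ^ 2) := by
    subst hB
    simpa only [hu] using dotProduct_conj_diagonal_mulVec_le_of_gap hΓ (lam := lam) (i₀ := 0)
      (fun i hi => hmono (Fin.one_le_of_ne_zero hi)) hgap hv hveig u
  have hAv : v ⬝ᵥ A *ᵥ v ≤ u ⬝ᵥ A *ᵥ u := by
    simpa only [hueig, dotProduct_smul, smul_eq_mul, hu, hv, mul_one]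
      using hAh.dotProduct_mulVec_le hmax v
  have hsin : 1 - (u ⬝ᵥ v) ^ 2 ≤ 4 * ‖A - B‖ ^ 2 / (lam 0 - lam 1) ^ 2 :=
    one_sub_sq_dotProduct_le hAh hBh hu hv (sub_pos.2 hgap) hAv (by
      rw [hveig, dotProduct_smul, smul_eq_mul, hv]; linarith)
  calc min ((u - v) ⬝ᵥ (u - v)) ((-u - v) ⬝ᵥ (-u - v)) ≤ 2 * (1 - (u ⬝ᵥ v) ^ 2) :=
        min_sub_dotProduct_le hu hv
    _ ≤ 2 * (4 * ‖A - B‖ ^ 2 / (lam 0 - lam 1) ^ 2) := by gcongr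
    _ = 8 * ‖A - B‖ ^ 2 / (lam 0 - lam 1) ^ 2 := by ring
end

section
/- Suppose a_n = Θ(1), b_n = Θ(1), c_n = 0, d_n = Θ(n^{-η}) with η > 0, q fixed. Then for fixed w ∈ (0,1], R_n(w) = 8a_n{q(1-2w)+(n-1)w^2} / (d_n{q+(n-1-2q)w})^2 = Θ(n^{2η-1}), and for w = 0, R_n(0) = 8a_n q/(d_n^2 q^2) = Θ(n^{2η}). -/
open Asymptotics Filter

/-! With `c = 0` the bound is `8 a_n P_n(w) / (d_n Q_n(w))²` for affine polynomials `P_n, Q_n`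
in `n`. For `w > 0` both have nonzero slope (`w²` and `w`), so each is `Θ(n)`; for `w = 0` both
are the constant `q`. Multiplying and dividing `Θ`-rates of powers of `n` gives the exponents. -/

section PowerRates

variable {f g : ℕ → ℝ} {α β : ℝ}

lemma isTheta_const_natCast_rpow_zero {c : ℝ} (hc : c ≠ 0) :
    (fun _ : ℕ => c) =Θ[atTop] fun n : ℕ => (n : ℝ) ^ (0 : ℝ) := by
  simpa only [Real.rpow_zero] using isTheta_const_const hc one_ne_zero

lemma isTheta_affine_natCast_rpow_one {k : ℝ} (hk : k ≠ 0) (m : ℝ) :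
    (fun n : ℕ => k * n + m) =Θ[atTop] fun n : ℕ => (n : ℝ) ^ (1 : ℝ) := by
  have hlin : (fun n : ℕ => k * (n : ℝ)) =Θ[atTop] fun n : ℕ => (n : ℝ) ^ (1 : ℝ) := by
    simpa only [Real.rpow_one] using isTheta_rfl.const_mul_left hk
  have hconst : (fun _ : ℕ => m) =o[atTop] fun n : ℕ => (n : ℝ) ^ (1 : ℝ) := by
    simpa only [Real.rpow_one] using
      isLittleO_const_left.2 <| Or.inr <| tendsto_norm_atTop_atTop.comp tendsto_natCast_atTop_atTop
  exact hlin.add_isLittleO hconst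

lemma Asymptotics.IsTheta.mul_natCast_rpow (hf : f =Θ[atTop] fun n : ℕ => (n : ℝ) ^ α)
    (hg : g =Θ[atTop] fun n : ℕ => (n : ℝ) ^ β) :
    (fun n => f n * g n) =Θ[atTop] fun n : ℕ => (n : ℝ) ^ (α + β) := by
  refine (hf.mul hg).trans_eventuallyEq ?_
  filter_upwards [eventually_gt_atTop 0] with n hn
  rw [Real.rpow_add (Nat.cast_pos.2 hn)]

lemma Asymptotics.IsTheta.div_sq_natCast_rpow (hf : f =Θ[atTop] fun n : ℕ => (n : ℝ) ^ α)
    (hg : g =Θ[atTop] fun n : ℕ => (n : ℝ) ^ β) :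
    (fun n => f n / g n ^ 2) =Θ[atTop] fun n : ℕ => (n : ℝ) ^ (α - 2 * β) := by
  refine (hf.div (hg.pow 2)).trans_eventuallyEq ?_
  filter_upwards [eventually_gt_atTop 0] with n hn
  have hn : (0 : ℝ) < n := Nat.cast_pos.2 hn
  rw [Real.rpow_sub hn, mul_comm, Real.rpow_mul hn.le, Real.rpow_two]

end PowerRates

theorem rate_weak_identifiability_no_signal_general
    (a b c d : ℕ → ℝ) (q η : ℝ) (hq : 0 < q)
    (ha : a =Θ[atTop] fun _ => (1 : ℝ))
    (hc : ∀ n, c n = 0) (hd : d =Θ[atTop] fun n => (n : ℝ) ^ (-η))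
    (R : ℝ → ℕ → ℝ)
    (hR : ∀ w n, R w n =
      (8 * a n * (q * (1 - 2*w) + ((n : ℝ) - 1) * w^2) + 16 * b n * c n * (1 - w)^2) /
        (d n * (q + ((n : ℝ) - 1 - 2*q) * w) + c n * (1 - w))^2) :
    (∀ w ∈ Set.Ioc (0:ℝ) 1, (R w) =Θ[atTop] fun n => (n : ℝ) ^ (2*η - 1)) ∧
    ((R 0) =Θ[atTop] fun n => (n : ℝ) ^ (2*η)) := by
  have h8a : (fun n => 8 * a n) =Θ[atTop] fun n : ℕ => (n : ℝ) ^ (0 : ℝ) := by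
    simpa only [Real.rpow_zero] using ha.const_mul_left (by norm_num : (8 : ℝ) ≠ 0)
  constructor
  · rintro w ⟨hw, -⟩
    have hRw : R w = fun n => 8 * a n * (w ^ 2 * n + (q * (1 - 2 * w) - w ^ 2)) /
        (d n * (w * n + (q - (1 + 2 * q) * w))) ^ 2 := by
      funext n
      rw [hR, hc]
      ring
    rw [hRw]
    have hnum := h8a.mul_natCast_rpow <|
      isTheta_affine_natCast_rpow_one (pow_pos hw 2).ne' (q * (1 - 2 * w) - w ^ 2)
    have hden := hd.mul_natCast_rpow <|
      isTheta_affine_natCast_rpow_one hw.ne' (q - (1 + 2 * q) * w)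
    convert hnum.div_sq_natCast_rpow hden using 3
    ring
  · have hR0 : R 0 = fun n => 8 * a n * q / (d n * q) ^ 2 := by
      funext n
      rw [hR, hc]
      ring
    rw [hR0]
    have hq' := isTheta_const_natCast_rpow_zero hq.ne'
    convert (h8a.mul_natCast_rpow hq').div_sq_natCast_rpow (hd.mul_natCast_rpow hq') using 3
    ring

/-- Asymptotic orders of the MSE upper bound under a weak identifiability regime without
regression signal (`α = 0`, so `c_n = 0`): if `a_n, b_n = Θ(1)`, `d_n = Θ(n^{-η})` with
`η > 0`, then `R_n(w) = Θ(n^{2η-1})` for fixed `w ∈ (0,1]`, while `R_n(0) = Θ(n^{2η})`. -/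
theorem rate_weak_identifiability_no_signal
    (a b c d : ℕ → ℝ) (q η : ℝ) (hq : 0 < q) (hη : 0 < η)
    (ha : a =Θ[atTop] fun _ => (1 : ℝ)) (hb : b =Θ[atTop] fun _ => (1 : ℝ))
    (hc : ∀ n, c n = 0) (hd : d =Θ[atTop] fun n => (n : ℝ) ^ (-η))
    (R : ℝ → ℕ → ℝ)
    (hR : ∀ w n, R w n =
      (8 * a n * (q * (1 - 2*w) + ((n : ℝ) - 1) * w^2) + 16 * b n * c n * (1 - w)^2) /
        (d n * (q + ((n : ℝ) - 1 - 2*q) * w) + c n * (1 - w))^2) :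
    (∀ w ∈ Set.Ioc (0:ℝ) 1, (R w) =Θ[atTop] fun n => (n : ℝ) ^ (2*η - 1)) ∧
    ((R 0) =Θ[atTop] fun n => (n : ℝ) ^ (2*η)) :=
  rate_weak_identifiability_no_signal_general a b c d q η hq ha hc hd R hR
end
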